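/- Existence of the inserted particle value: Let f be C^2 with f'' > 0, let x2 < x23 < x3 and u2 ≤ u3. Then there exists u23 ∈ [u2, u3] such that (x23 − x2)·a(u2,u23) + (x3 − x23)·a(u23,u3) = (x3 − x2)·a(u2,u3). -/

import Mathlib

/-!
For `t ∈ [u2, u3]` the map `F t = (x23 - x2) a(u2, t) + (x3 - x23) a(t, u3)` is continuous,
since `a` is a ratio of primitives with nonvanishing denominator away from the diagonal and
`a(c, t)` is squeezed between `c` and `t` near it. As `u2 ≤ a(u2, u3) ≤ u3`, the endpoint values
`F u2 = (x23 - x2) u2 + (x3 - x23) a(u2, u3)` and `F u3 = (x23 - x2) a(u2, u3) + (x3 - x23) u3`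
bracket `(x3 - x2) a(u2, u3)`, and the intermediate value theorem gives `u23`.
-/

noncomputable def nlAvgExt (f : ℝ → ℝ) (u1 u2 : ℝ) : ℝ :=
  if u1 = u2 then u1 else
    (∫ u in u1..u2, deriv (deriv f) u * u) / (∫ u in u1..u2, deriv (deriv f) u)

open Set intervalIntegral MeasureTheory

lemma intervalIntegral_ne_zero_of_pos {g : ℝ → ℝ} {a b : ℝ} (hab : a ≠ b)
    (hint : IntervalIntegrable g volume a b) (hpos : ∀ u ∈ uIcc a b, 0 < g u) :
    ∫ u in a..b, g u ≠ 0 := by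
  rcases hab.lt_or_gt with h | h
  · exact (intervalIntegral_pos_of_pos_on hint
      (fun u hu => hpos u (Icc_subset_uIcc (Ioo_subset_Icc_self hu))) h).ne'
  · rw [integral_symm, neg_ne_zero]
    exact (intervalIntegral_pos_of_pos_on hint.symm
      (fun u hu => hpos u (Icc_subset_uIcc' (Ioo_subset_Icc_self hu))) h).ne'

section
variable {f : ℝ → ℝ}

@[simp] lemma nlAvgExt_self (u : ℝ) : nlAvgExt f u u = u := if_pos rfl

lemma nlAvgExt_comm (s t : ℝ) : nlAvgExt f s t = nlAvgExt f t s := by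
  rcases eq_or_ne s t with rfl | hst
  · rfl
  · rw [nlAvgExt, if_neg hst, nlAvgExt, if_neg hst.symm, integral_symm s t, integral_symm s t,
      neg_div_neg_eq]

lemma nlAvgExt_mem_Icc {s t : ℝ} (hst : s ≤ t)
    (hint : IntervalIntegrable (deriv (deriv f)) volume s t)
    (hpos : ∀ u ∈ Icc s t, 0 < deriv (deriv f) u) : nlAvgExt f s t ∈ Icc s t := by
  rcases hst.eq_or_lt with rfl | hlt
  · simp
  set g := deriv (deriv f)
  have hint_mul : IntervalIntegrable (fun u => g u * u) volume s t :=
    hint.mul_continuousOn continuousOn_id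
  have hmass : 0 < ∫ u in s..t, g u :=
    intervalIntegral_pos_of_pos_on hint (fun u hu => hpos u (Ioo_subset_Icc_self hu)) hlt
  rw [nlAvgExt, if_neg hlt.ne, mem_Icc, le_div_iff₀ hmass, div_le_iff₀ hmass,
    ← intervalIntegral.integral_const_mul, ← intervalIntegral.integral_const_mul]
  constructor
  · refine integral_mono_on hst (hint.const_mul s) hint_mul fun u hu => ?_
    rw [mul_comm s]
    exact mul_le_mul_of_nonneg_left hu.1 (hpos u hu).le
  · refine integral_mono_on hst hint_mul (hint.const_mul t) fun u hu => ?_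
    rw [mul_comm t]
    exact mul_le_mul_of_nonneg_left hu.2 (hpos u hu).le

lemma nlAvgExt_mem_uIcc {s t : ℝ} (hint : IntervalIntegrable (deriv (deriv f)) volume s t)
    (hpos : ∀ u ∈ uIcc s t, 0 < deriv (deriv f) u) : nlAvgExt f s t ∈ uIcc s t := by
  rcases le_total s t with h | h
  · rw [uIcc_of_le h] at hpos ⊢
    exact nlAvgExt_mem_Icc h hint hpos
  · rw [uIcc_of_ge h] at hpos ⊢
    rw [nlAvgExt_comm]
    exact nlAvgExt_mem_Icc h hint.symm hpos

lemma continuousOn_nlAvgExt {I : Set ℝ} [hI : I.OrdConnected]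
    (hg : Continuous (deriv (deriv f))) (hpos : ∀ u ∈ I, 0 < deriv (deriv f) u)
    {c : ℝ} (hc : c ∈ I) : ContinuousOn (nlAvgExt f c) I := by
  set g := deriv (deriv f)
  have hint : ∀ a b, IntervalIntegrable g volume a b := hg.intervalIntegrable
  intro t ht
  rcases eq_or_ne t c with rfl | htc
  · rw [Metric.continuousWithinAt_iff]
    refine fun ε hε => ⟨ε, hε, fun x hx hxt => ?_⟩
    rw [nlAvgExt_self, Real.dist_eq] at *
    exact (abs_sub_left_of_mem_uIcc (nlAvgExt_mem_uIcc (hint t x)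
      fun u hu => hpos u (hI.uIcc_subset ht hx hu))).trans_lt hxt
  · have hratio : ContinuousAt
        (fun x => (∫ u in c..x, g u * u) / (∫ u in c..x, g u)) t :=
      ((continuous_primitive (fun a b => (hg.mul continuous_id).intervalIntegrable a b)
        c).continuousAt).div (continuous_primitive hint c).continuousAt
        (intervalIntegral_ne_zero_of_pos htc.symm (hint c t)
          fun u hu => hpos u (hI.uIcc_subset hc ht hu))
    refine hratio.continuousWithinAt.congr_of_eventuallyEq ?_ (if_neg htc.symm)
    filter_upwards [nhdsWithin_le_nhds (isOpen_ne.mem_nhds htc)] with x hx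
    exact if_neg (Ne.symm hx)

end

theorem insert_value_exists (f : ℝ → ℝ) (hf : ContDiff ℝ 2 f)
    (u2 u3 : ℝ) (hu : u2 ≤ u3)
    (hconv : ∀ u ∈ Set.Icc u2 u3, 0 < deriv (deriv f) u)
    (x2 x23 x3 : ℝ) (hx2 : x2 < x23) (hx3 : x23 < x3) :
    ∃ u23 ∈ Set.Icc u2 u3,
      (x23 - x2) * nlAvgExt f u2 u23 + (x3 - x23) * nlAvgExt f u23 u3
        = (x3 - x2) * nlAvgExt f u2 u3 := by
  have hg : Continuous (deriv (deriv f)) :=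
    (contDiff_succ_iff_deriv.1 hf).2.2.continuous_deriv le_rfl
  have hleft := continuousOn_nlAvgExt hg hconv (left_mem_Icc.2 hu)
  have hright : ContinuousOn (fun t => nlAvgExt f t u3) (Icc u2 u3) := by
    simpa only [nlAvgExt_comm _ u3] using continuousOn_nlAvgExt hg hconv (right_mem_Icc.2 hu)
  have ha := nlAvgExt_mem_Icc hu (hg.intervalIntegrable u2 u3) hconv
  have hF : ContinuousOn
      (fun t => (x23 - x2) * nlAvgExt f u2 t + (x3 - x23) * nlAvgExt f t u3) (Icc u2 u3) :=
    (continuousOn_const.mul hleft).add (continuousOn_const.mul hright)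
  refine intermediate_value_Icc hu hF ⟨?_, ?_⟩ <;> simp only [nlAvgExt_self] <;> nlinarith [ha.1, ha.2]
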